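/- arXiv:1503.09181 — 4 statements merged into one kernel-verified Lean document; each statement's English description precedes it below -/
import Mathlib

section
/- Let A be a commutative, finite-dimensional, semisimple Yetter-Drinfel'd Hopf algebra over K[G] (as in the context). For primitive idempotents e and e' of A, the following conditions are equivalent: (1) the linear functional a ↦ Σ η_e(a₍₁₎) η_{e'}(a₍₂₎) (convolution product of the characters η_e and η_{e'}) is a K-algebra homomorphism A → K; (2) Q_{e'}^⊥ ⊆ T_e; (3) |G|⁻¹ · Σ_{γ ∈ Ĝ} Σ_{g ∈ G} γ(g)⁻¹ · ((η_{e'} ∘ ψ_γ) ⊗ (η_e ∘ φ_g)) = η_{e'} ⊗ η_e in A* ⊗_K A*. -/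
open TensorProduct

/-- A Yetter-Drinfel'd Hopf algebra over the group ring `K[G]` of a finite abelian group `G`,
encoded by the data `φ, ψ, Δ, ε, S`. -/
structure YetterDrinfeldHopf (K : Type*) [Field K] (G : Type*) [CommGroup G] [Fintype G]
    [Fintype (G →* Kˣ)] (A : Type*) [Ring A] [Algebra K A] where
  φ : G →* (A ≃ₐ[K] A)
  ψ : (G →* Kˣ) →* (A ≃ₐ[K] A)
  φψ_comm : ∀ (g : G) (γ : G →* Kˣ) (a : A), φ g (ψ γ a) = ψ γ (φ g a)
  Δ : A →ₗ[K] A ⊗[K] A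
  ε : A →ₐ[K] K
  coassoc : ∀ a : A,
    (TensorProduct.assoc K A A A) ((TensorProduct.map Δ LinearMap.id) (Δ a)) =
      (TensorProduct.map LinearMap.id Δ) (Δ a)
  counit_left : ∀ a : A,
    (TensorProduct.lid K A) ((TensorProduct.map ε.toLinearMap LinearMap.id) (Δ a)) = a
  counit_right : ∀ a : A,
    (TensorProduct.rid K A) ((TensorProduct.map LinearMap.id ε.toLinearMap) (Δ a)) = a
  Δ_one : Δ 1 = 1 ⊗ₜ[K] 1
  Δ_φ : ∀ (g : G) (a : A),
    Δ (φ g a) = (TensorProduct.map (φ g).toLinearMap (φ g).toLinearMap) (Δ a)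
  Δ_ψ : ∀ (γ : G →* Kˣ) (a : A),
    Δ (ψ γ a) = (TensorProduct.map (ψ γ).toLinearMap (ψ γ).toLinearMap) (Δ a)
  ε_φ : ∀ (g : G) (a : A), ε (φ g a) = ε a
  ε_ψ : ∀ (γ : G →* Kˣ) (a : A), ε (ψ γ a) = ε a
  /-- Braided multiplicativity of the coproduct:
  `Δ(ab) = |G|⁻¹ ∑_γ ∑_g γ(g)⁻¹ (a₍₁₎ φ_g(b₍₁₎)) ⊗ (ψ_γ(a₍₂₎) b₍₂₎)`. -/
  Δ_mul : ∀ a b : A,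
    Δ (a * b) = (Fintype.card G : K)⁻¹ •
      ∑ γ : G →* Kˣ, ∑ g : G, ((γ g : K))⁻¹ •
        (TensorProduct.map (LinearMap.mul' K A) (LinearMap.mul' K A))
          ((TensorProduct.map
              (TensorProduct.map LinearMap.id (φ g).toLinearMap)
              (TensorProduct.map (ψ γ).toLinearMap LinearMap.id))
            ((TensorProduct.tensorTensorTensorComm K A A A A) (Δ a ⊗ₜ[K] Δ b)))
  S : A →ₗ[K] A
  S_φ : ∀ (g : G) (a : A), S (φ g a) = φ g (S a)
  S_ψ : ∀ (γ : G →* Kˣ) (a : A), S (ψ γ a) = ψ γ (S a)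
  antipode_left : ∀ a : A,
    (LinearMap.mul' K A) ((TensorProduct.map S LinearMap.id) (Δ a)) = algebraMap K A (ε a)
  antipode_right : ∀ a : A,
    (LinearMap.mul' K A) ((TensorProduct.map LinearMap.id S) (Δ a)) = algebraMap K A (ε a)

/-- A primitive idempotent: a nonzero idempotent that cannot be written as the sum of two
nonzero orthogonal idempotents. -/
def IsPrimitiveIdempotent {A : Type*} [Ring A] (e : A) : Prop :=
  e ≠ 0 ∧ IsIdempotentElem e ∧
    ∀ f f' : A, IsIdempotentElem f → IsIdempotentElem f' → f * f' = 0 → e = f + f' →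
      f = 0 ∨ f' = 0

/-!
Write `R` for the action on `A* ⊗ A*` of the R-matrix `|G|⁻¹ Σ γ(g)⁻¹ ψ_γ ⊗ φ_g`. Braided
multiplicativity of `Δ` says that `(η ⋆ η')(ab)` is obtained by applying
`(η ⋆ -) ⊗ (- ⋆ η')` to `R(η' ⊗ η)` and pairing with `a ⊗ b`, while `(η ⋆ η')(a) (η ⋆ η')(b)`
comes in the same way from `η' ⊗ η`. Convolution by a character is invertible (the inverse is
convolution by the character composed with `S`) and `A* ⊗ A* → (A ⊗ A)*` is injective, so
`η ⋆ η'` is multiplicative iff `R(η' ⊗ η) = η' ⊗ η`.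

A character of the semisimple algebra `A` is determined by the primitive idempotent it does not
kill, so `η ∘ φ_g = η` iff `g ∈ T_e`, and `η' ∘ ψ_γ = η'` iff `γ ∈ Q_{e'}`. At `x ⊗ y` the
equation `R(η' ⊗ η) = η' ⊗ η` reads `Σ_g c_g(x) η(φ_g y) = |G| η'(x) η(y)` with
`c_g(x) = Σ_γ γ(g)⁻¹ η'(ψ_γ x)`. Invariance of `γ ↦ η'(ψ_γ x)` under `Q_{e'}` makes `c_g` vanish
for `g ∉ Q_{e'}^⊥`, and `Σ_g c_g(x) = |G| η'(x)` by orthogonality of characters: this is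
`(2) ⇒ (3)`. Conversely, if `g₀ ∈ Q_{e'}^⊥` moves `e`, take `x = e'` and `y = φ_{g₀}⁻¹ e`: the
right side vanishes, while the left side is `|Q_{e'}|` times the number of `g ∈ Q_{e'}^⊥` with
`φ_g y = e`, among them `g₀`.
-/

namespace IsPrimitiveIdempotent

section Ring

variable {A B : Type*} [Ring A] [Ring B] {e : A}

theorem map {F : Type*} [EquivLike F A B] [RingEquivClass F A B] (σ : F)
    (he : IsPrimitiveIdempotent e) : IsPrimitiveIdempotent (σ e) := by
  let τ : A ≃+* B := RingEquivClass.toRingEquiv σ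
  obtain ⟨he0, heI, heP⟩ := he
  refine ⟨(map_ne_zero_iff σ (EquivLike.injective σ)).2 he0, heI.map σ, ?_⟩
  intro f f' hf hf' hff' hsum
  have hpull := heP (τ.symm f) (τ.symm f') (hf.map τ.symm) (hf'.map τ.symm)
    (by rw [← map_mul, hff', map_zero])
    (by rw [← map_add, ← hsum]; exact (τ.symm_apply_apply e).symm)
  simpa only [map_eq_zero_iff _ τ.symm.injective] using hpull

end Ring

variable {A : Type*} [CommRing A] {e f : A}

theorem mul_eq_zero_or_eq (he : IsPrimitiveIdempotent e) (hf : IsIdempotentElem f) :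
    e * f = 0 ∨ e * f = e := by
  obtain ⟨-, heI, heP⟩ := he
  have horth : e * f * (e * (1 - f)) = 0 := by
    rw [mul_mul_mul_comm, heI, mul_sub, mul_one, hf, sub_self, mul_zero]
  refine (heP _ _ (heI.mul hf) (heI.mul hf.one_sub) horth (by ring)).imp_right fun h => ?_
  rwa [mul_sub, mul_one, sub_eq_zero, eq_comm] at h

theorem mul_eq_zero_of_ne (he : IsPrimitiveIdempotent e) (hf : IsPrimitiveIdempotent f)
    (hne : e ≠ f) : e * f = 0 := by
  refine (he.mul_eq_zero_or_eq hf.2.1).resolve_right fun hef => ?_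
  rcases hf.mul_eq_zero_or_eq he.2.1 with hfe | hfe
  · exact he.1 (by rw [← hef, mul_comm, hfe])
  · exact hne (by rw [← hef, mul_comm, hfe])

theorem apply_eq_ite {F R : Type*} [MulZeroOneClass R] [FunLike F A R]
    [MonoidWithZeroHomClass F A R] (η : F) (he : IsPrimitiveIdempotent e)
    (hf : IsPrimitiveIdempotent f) (hη : η e = 1) [Decidable (f = e)] :
    η f = if f = e then 1 else 0 := by
  split_ifs with h
  · rw [h, hη]
  · rw [← mul_one (η f), ← hη, ← map_mul, hf.mul_eq_zero_of_ne he h, map_zero]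

theorem algHom_ext {R : Type*} [CommRing R] [Nontrivial R] [Algebra R A] [IsSemisimpleRing A]
    (he : IsPrimitiveIdempotent e) {χ₁ χ₂ : A →ₐ[R] R} (h₁ : χ₁ e = 1) (h₂ : χ₂ e = 1) :
    χ₁ = χ₂ := by
  obtain ⟨u, huI, hu⟩ := IsSemisimpleRing.ideal_eq_span_idempotent (RingHom.ker χ₁)
  have hχ₁u : χ₁ u = 0 := RingHom.mem_ker.1 (hu ▸ Ideal.subset_span rfl)
  -- `e` cannot lie in `ker χ₁`, so primitivity forces `e u = 0`.
  have heu : e * u = 0 := (he.mul_eq_zero_or_eq huI).resolve_right fun h => by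
    have h' := congrArg χ₁ h
    rw [map_mul, hχ₁u, mul_zero, h₁] at h'
    exact zero_ne_one h'
  have hker : RingHom.ker χ₁ ≤ RingHom.ker χ₂ := by
    rw [hu, Ideal.span_le, Set.singleton_subset_iff, SetLike.mem_coe, RingHom.mem_ker]
    simpa [h₂] using congrArg χ₂ heu
  ext a
  have hmem : a - algebraMap R A (χ₁ a) ∈ RingHom.ker χ₁ := by simp [RingHom.mem_ker]
  have h := hker hmem
  rw [RingHom.mem_ker, map_sub, AlgHom.commutes, Algebra.algebraMap_self, RingHom.id_apply,
    sub_eq_zero] at h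
  exact h.symm

theorem algHom_apply_eq_of_map_eq {R : Type*} [CommRing R] [Nontrivial R] [Algebra R A]
    [IsSemisimpleRing A] (he : IsPrimitiveIdempotent e) {η : A →ₐ[R] R} (hη : η e = 1)
    {σ : A ≃ₐ[R] A} (hσ : σ e = e) (a : A) : η (σ a) = η a :=
  DFunLike.congr_fun (he.algHom_ext (χ₁ := η.comp σ) (by simp [hσ, hη]) hη) a

end IsPrimitiveIdempotent

theorem MonoidHom.sum_mul_eq_zero_of_invariant {H R : Type*} [Group H] [Fintype H] [CommRing R]
    [NoZeroDivisors R] (χ : H →* R) (F : H → R) {β : H} (hβ : χ β ≠ 1)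
    (hF : ∀ h, F (β * h) = F h) : ∑ h, χ h * F h = 0 := by
  have hshift : ∑ h, χ h * F h = χ β * ∑ h, χ h * F h := by
    calc ∑ h, χ h * F h = ∑ h, χ (β * h) * F (β * h) :=
          (Fintype.sum_equiv (Equiv.mulLeft β) _ _ fun _ => rfl).symm
      _ = χ β * ∑ h, χ h * F h := by simp only [map_mul, hF, Finset.mul_sum, mul_assoc]
  have h0 : (χ β - 1) * ∑ h, χ h * F h = 0 := by rw [sub_mul, one_mul, ← hshift, sub_self]
  exact (mul_eq_zero.1 h0).resolve_left (sub_ne_zero.2 hβ)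

theorem MonoidHom.sum_inv_apply {G K : Type*} [CommGroup G] [Fintype G] [Field K]
    (γ : G →* Kˣ) [Decidable (γ = 1)] :
    ∑ g, ((γ g : K))⁻¹ = if γ = 1 then (Fintype.card G : K) else 0 := by
  split_ifs with hγ
  · simp [hγ]
  · have hf : (Units.coeHom K).comp γ⁻¹ ≠ 1 := fun h =>
      hγ (MonoidHom.ext fun g => by simpa using DFunLike.congr_fun h g)
    simpa using sum_hom_units_eq_zero _ hf

theorem MonoidHom.sum_sum_inv_apply_mul {G K : Type*} [CommGroup G] [Fintype G] [Field K]
    [Fintype (G →* Kˣ)] (F : (G →* Kˣ) → K) :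
    ∑ g, ∑ γ : G →* Kˣ, ((γ g : K))⁻¹ * F γ = Fintype.card G * F 1 := by
  classical
  rw [Finset.sum_comm]
  simp [← Finset.sum_mul, MonoidHom.sum_inv_apply]

theorem LinearMap.exists_algHom_apply_eq_iff {R A B : Type*} [CommSemiring R] [Semiring A]
    [Algebra R A] [Semiring B] [Algebra R B] {f : A →ₗ[R] B} (hf : f 1 = 1) :
    (∃ χ : A →ₐ[R] B, ∀ a, χ a = f a) ↔ ∀ a b, f (a * b) = f a * f b :=
  ⟨fun ⟨χ, hχ⟩ a b => by simp only [← hχ, map_mul],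
    fun hmul => ⟨AlgHom.ofLinearMap f hf hmul, fun _ => rfl⟩⟩

namespace YetterDrinfeldHopf

open TensorProduct (lid rid)

section Ring

variable {K G A : Type*} [Field K] [CommGroup G] [Fintype G] [Fintype (G →* Kˣ)]
  [Ring A] [Algebra K A] (D : YetterDrinfeldHopf K G A)

noncomputable def conv : (A →ₗ[K] K) →ₗ[K] (A →ₗ[K] K) →ₗ[K] (A →ₗ[K] K) :=
  (mapBilinear (RingHom.id K) A A K K).compr₂
    (LinearMap.lcomp K K D.Δ ∘ₗ LinearMap.llcomp K (A ⊗[K] A) (K ⊗[K] K) K (lid K K).toLinearMap)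

@[simp] theorem conv_apply (f h : A →ₗ[K] K) (a : A) :
    D.conv f h a = lid K K (map f h (D.Δ a)) := rfl

theorem conv_assoc (f g h : A →ₗ[K] K) : D.conv (D.conv f g) h = D.conv f (D.conv g h) := by
  have hassoc : (lid K K).toLinearMap ∘ₗ map ((lid K K).toLinearMap ∘ₗ map f g) h =
      (lid K K).toLinearMap ∘ₗ map f ((lid K K).toLinearMap ∘ₗ map g h) ∘ₗ
        (TensorProduct.assoc K A A A).toLinearMap :=
    ext_threefold fun x y z => by simp [mul_assoc]
  ext a
  calc D.conv (D.conv f g) h a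
      = lid K K (map ((lid K K).toLinearMap ∘ₗ map f g) h (map D.Δ LinearMap.id (D.Δ a))) := by
        rw [map_map]; rfl
    _ = lid K K (map f ((lid K K).toLinearMap ∘ₗ map g h)
          (TensorProduct.assoc K A A A (map D.Δ LinearMap.id (D.Δ a)))) :=
        LinearMap.congr_fun hassoc _
    _ = D.conv f (D.conv g h) a := by rw [D.coassoc, map_map]; rfl

theorem counit_conv (f : A →ₗ[K] K) : D.conv D.ε.toLinearMap f = f := by
  have hcounit : (lid K K).toLinearMap ∘ₗ map D.ε.toLinearMap f =
      f ∘ₗ (lid K A).toLinearMap ∘ₗ map D.ε.toLinearMap LinearMap.id :=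
    ext' fun x y => by simp
  ext a
  simpa [D.counit_left] using LinearMap.congr_fun hcounit (D.Δ a)

theorem conv_counit (f : A →ₗ[K] K) : D.conv f D.ε.toLinearMap = f := by
  have hcounit : (lid K K).toLinearMap ∘ₗ map f D.ε.toLinearMap =
      f ∘ₗ (rid K A).toLinearMap ∘ₗ map LinearMap.id D.ε.toLinearMap :=
    ext' fun x y => by simp [mul_comm]
  ext a
  simpa [D.counit_right] using LinearMap.congr_fun hcounit (D.Δ a)

theorem antipode_conv (χ : A →ₐ[K] K) :
    D.conv (χ.toLinearMap ∘ₗ D.S) χ.toLinearMap = D.ε.toLinearMap := by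
  have hS : (lid K K).toLinearMap ∘ₗ map (χ.toLinearMap ∘ₗ D.S) χ.toLinearMap =
      χ.toLinearMap ∘ₗ LinearMap.mul' K A ∘ₗ map D.S LinearMap.id :=
    ext' fun x y => by simp
  ext a
  simpa [D.antipode_left] using LinearMap.congr_fun hS (D.Δ a)

theorem conv_antipode (χ : A →ₐ[K] K) :
    D.conv χ.toLinearMap (χ.toLinearMap ∘ₗ D.S) = D.ε.toLinearMap := by
  have hS : (lid K K).toLinearMap ∘ₗ map χ.toLinearMap (χ.toLinearMap ∘ₗ D.S) =
      χ.toLinearMap ∘ₗ LinearMap.mul' K A ∘ₗ map LinearMap.id D.S :=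
    ext' fun x y => by simp
  ext a
  simpa [D.antipode_right] using LinearMap.congr_fun hS (D.Δ a)

theorem map_conv_injective (η η' : A →ₐ[K] K) :
    Function.Injective (map (D.conv η.toLinearMap) (D.conv.flip η'.toLinearMap)) := by
  have hleft : D.conv (η.toLinearMap ∘ₗ D.S) ∘ₗ D.conv η.toLinearMap = LinearMap.id := by
    ext1 f
    simp only [LinearMap.comp_apply, ← conv_assoc, antipode_conv, counit_conv, LinearMap.id_apply]
  have hright : D.conv.flip (η'.toLinearMap ∘ₗ D.S) ∘ₗ D.conv.flip η'.toLinearMap =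
      LinearMap.id := by
    ext1 f
    simp only [LinearMap.comp_apply, LinearMap.flip_apply, conv_assoc, conv_antipode,
      conv_counit, LinearMap.id_apply]
  refine Function.LeftInverse.injective
    (g := map (D.conv (η.toLinearMap ∘ₗ D.S)) (D.conv.flip (η'.toLinearMap ∘ₗ D.S))) fun t => ?_
  rw [map_map, hleft, hright, map_id, LinearMap.id_apply]

/-- The R-matrix `|G|⁻¹ ∑ γ(g)⁻¹ γ ⊗ g` of the Drinfeld double of `K[G]`, acting on `f ⊗ h`
through `ψ` and `φ`. -/
noncomputable def rMatrixAct (f h : A →ₗ[K] K) : (A →ₗ[K] K) ⊗[K] (A →ₗ[K] K) :=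
  (Fintype.card G : K)⁻¹ •
    ∑ γ : G →* Kˣ, ∑ g : G, ((γ g : K))⁻¹ •
      ((f ∘ₗ (D.ψ γ).toLinearMap) ⊗ₜ[K] (h ∘ₗ (D.φ g).toLinearMap))

theorem conv_one (η η' : A →ₐ[K] K) : D.conv η.toLinearMap η'.toLinearMap 1 = 1 := by
  simp [D.Δ_one]

theorem conv_mul (η η' : A →ₐ[K] K) (a b : A) :
    D.conv η.toLinearMap η'.toLinearMap (a * b) =
      dualDistrib K A A (map (D.conv η.toLinearMap) (D.conv.flip η'.toLinearMap)
        (D.rMatrixAct η'.toLinearMap η.toLinearMap)) (a ⊗ₜ b) := by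
  have hsplit : ∀ (γ : G →* Kˣ) (g : G),
      (lid K K).toLinearMap ∘ₗ map η.toLinearMap η'.toLinearMap ∘ₗ
        map (LinearMap.mul' K A) (LinearMap.mul' K A) ∘ₗ
        map (map LinearMap.id (D.φ g).toLinearMap) (map (D.ψ γ).toLinearMap LinearMap.id) ∘ₗ
        (tensorTensorTensorComm K A A A A).toLinearMap =
      LinearMap.mul' K K ∘ₗ
        map ((lid K K).toLinearMap ∘ₗ
            map η.toLinearMap (η'.toLinearMap ∘ₗ (D.ψ γ).toLinearMap))
          ((lid K K).toLinearMap ∘ₗ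
            map (η.toLinearMap ∘ₗ (D.φ g).toLinearMap) η'.toLinearMap) := fun γ g =>
    ext_fourfold' fun x₁ x₂ y₁ y₂ => by simp; ring
  rw [conv_apply, D.Δ_mul]
  simp only [map_smul, map_sum, rMatrixAct, map_tmul, dualDistrib_apply, LinearMap.smul_apply,
    LinearMap.sum_apply, smul_eq_mul]
  congr 1
  refine Finset.sum_congr rfl fun γ _ => Finset.sum_congr rfl fun g _ => ?_
  congr 1
  simpa using LinearMap.congr_fun (hsplit γ g) (D.Δ a ⊗ₜ D.Δ b)

theorem exists_algHom_apply_eq_conv_iff [FiniteDimensional K A] (η η' : A →ₐ[K] K) :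
    (∃ χ : A →ₐ[K] K, ∀ a, χ a = D.conv η.toLinearMap η'.toLinearMap a) ↔
      D.rMatrixAct η'.toLinearMap η.toLinearMap = η'.toLinearMap ⊗ₜ η.toLinearMap := by
  have hinj : Function.Injective (dualDistrib K A A) := (dualDistribEquiv K A A).injective
  rw [LinearMap.exists_algHom_apply_eq_iff (D.conv_one η η'),
    ← (hinj.comp (D.map_conv_injective η η')).eq_iff, Function.comp_apply, Function.comp_apply]
  have hprod : ∀ a b, dualDistrib K A A (map (D.conv η.toLinearMap) (D.conv.flip η'.toLinearMap)
      (η'.toLinearMap ⊗ₜ η.toLinearMap)) (a ⊗ₜ b) =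
        D.conv η.toLinearMap η'.toLinearMap a * D.conv η.toLinearMap η'.toLinearMap b := by
    simp
  refine ⟨fun hmul => ext' fun a b => ?_, fun h a b => ?_⟩
  · rw [← conv_mul, hmul, hprod]
  · rw [conv_mul, ← hprod]
    exact LinearMap.congr_fun h (a ⊗ₜ b)

theorem rMatrixAct_eq_tmul_iff [FiniteDimensional K A] [CharZero K] (f h : A →ₗ[K] K) :
    D.rMatrixAct f h = f ⊗ₜ h ↔ ∀ x y,
      ∑ g, (∑ γ : G →* Kˣ, ((γ g : K))⁻¹ * f (D.ψ γ x)) * h (D.φ g y) =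
        Fintype.card G * (f x * h y) := by
  have hinj : Function.Injective (dualDistrib K A A) := (dualDistribEquiv K A A).injective
  have hG : (Fintype.card G : K) ≠ 0 := Nat.cast_ne_zero.2 Fintype.card_ne_zero
  have hpair : ∀ x y, dualDistrib K A A (D.rMatrixAct f h) (x ⊗ₜ y) =
      (Fintype.card G : K)⁻¹ *
        ∑ g, (∑ γ : G →* Kˣ, ((γ g : K))⁻¹ * f (D.ψ γ x)) * h (D.φ g y) := by
    intro x y
    simp only [rMatrixAct, map_smul, map_sum, dualDistrib_apply, LinearMap.smul_apply,
      LinearMap.sum_apply, smul_eq_mul, Finset.sum_mul, mul_assoc]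
    rw [Finset.sum_comm]
    rfl
  rw [← hinj.eq_iff]
  refine ⟨fun h3 x y => ?_, fun hP => ext' fun x y => ?_⟩
  · have := LinearMap.congr_fun h3 (x ⊗ₜ y)
    rwa [hpair, dualDistrib_apply, inv_mul_eq_iff_eq_mul₀ hG] at this
  · rw [hpair, dualDistrib_apply, inv_mul_eq_iff_eq_mul₀ hG, hP]

end Ring

section CommRing

variable {K G A : Type*} [Field K] [CommGroup G] [Fintype G] [Fintype (G →* Kˣ)]
  [CommRing A] [Algebra K A] [IsSemisimpleRing A] (D : YetterDrinfeldHopf K G A)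
  {e e' : A} {η η' : A →ₐ[K] K}

theorem sum_inv_mul_apply_ψ_eq_zero (he' : IsPrimitiveIdempotent e') (hη' : η' e' = 1)
    {β : G →* Kˣ} (hβ : D.ψ β e' = e') {g : G} (hβg : β g ≠ 1) (x : A) :
    ∑ γ : G →* Kˣ, ((γ g : K))⁻¹ * η' (D.ψ γ x) = 0 := by
  simpa using MonoidHom.sum_mul_eq_zero_of_invariant ((Units.coeHom K).comp (MonoidHom.eval g⁻¹))
    (fun γ => η' (D.ψ γ x)) (β := β) (by simpa using hβg)
    (fun γ => by simp [he'.algHom_apply_eq_of_map_eq hη' hβ])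

theorem sum_mul_apply_φ_eq_of_fixed (he : IsPrimitiveIdempotent e) (he' : IsPrimitiveIdempotent e')
    (hη : η e = 1) (hη' : η' e' = 1)
    (hfix : ∀ g : G, (∀ γ : G →* Kˣ, D.ψ γ e' = e' → γ g = 1) → D.φ g e = e) (x y : A) :
    ∑ g, (∑ γ : G →* Kˣ, ((γ g : K))⁻¹ * η' (D.ψ γ x)) * η (D.φ g y) =
      Fintype.card G * (η' x * η y) := by
  calc ∑ g, (∑ γ : G →* Kˣ, ((γ g : K))⁻¹ * η' (D.ψ γ x)) * η (D.φ g y)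
      = ∑ g, (∑ γ : G →* Kˣ, ((γ g : K))⁻¹ * η' (D.ψ γ x)) * η y := by
        refine Finset.sum_congr rfl fun g _ => ?_
        by_cases hg : ∀ γ : G →* Kˣ, D.ψ γ e' = e' → γ g = 1
        · rw [he.algHom_apply_eq_of_map_eq hη (hfix g hg)]
        · push Not at hg
          obtain ⟨β, hβ, hβg⟩ := hg
          rw [D.sum_inv_mul_apply_ψ_eq_zero he' hη' hβ hβg, zero_mul, zero_mul]
    _ = Fintype.card G * (η' x * η y) := by
        rw [← Finset.sum_mul, MonoidHom.sum_sum_inv_apply_mul, map_one, AlgEquiv.one_apply,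
          mul_assoc]

theorem fixed_of_sum_mul_apply_φ_eq [CharZero K] (he : IsPrimitiveIdempotent e)
    (he' : IsPrimitiveIdempotent e') (hη : η e = 1) (hη' : η' e' = 1)
    (hsum : ∀ x y : A, ∑ g, (∑ γ : G →* Kˣ, ((γ g : K))⁻¹ * η' (D.ψ γ x)) * η (D.φ g y) =
      Fintype.card G * (η' x * η y))
    (g₀ : G) (hg₀ : ∀ γ : G →* Kˣ, D.ψ γ e' = e' → γ g₀ = 1) : D.φ g₀ e = e := by
  classical
  by_contra hne
  set y := D.φ g₀⁻¹ e
  have hφy : ∀ g, D.φ g y = D.φ (g * g₀⁻¹) e := fun g => by simp [y, map_mul]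
  have hy : y ≠ e := fun h => hne (by
    nth_rewrite 1 [← h]
    rw [hφy, mul_inv_cancel, map_one, AlgEquiv.one_apply])
  set N := (Finset.univ.filter fun γ : G →* Kˣ => D.ψ γ e' = e').card
  have hinner : ∀ g, ∑ γ : G →* Kˣ, ((γ g : K))⁻¹ * η' (D.ψ γ e') =
      if ∀ γ : G →* Kˣ, D.ψ γ e' = e' → γ g = 1 then (N : K) else 0 := by
    intro g
    split_ifs with hg
    · rw [← Finset.sum_boole]
      refine Finset.sum_congr rfl fun γ _ => ?_
      rw [he'.apply_eq_ite η' (he'.map (D.ψ γ)) hη']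
      split_ifs with hγ
      · simp [hg γ hγ]
      · simp
    · push Not at hg
      obtain ⟨β, hβ, hβg⟩ := hg
      exact D.sum_inv_mul_apply_ψ_eq_zero he' hη' hβ hβg e'
  have hcount := hsum e' y
  rw [he.apply_eq_ite η (he.map (D.φ g₀⁻¹)) hη, if_neg hy, mul_zero, mul_zero] at hcount
  have hterm : ∀ g, (∑ γ : G →* Kˣ, ((γ g : K))⁻¹ * η' (D.ψ γ e')) * η (D.φ g y) =
      N * if (∀ γ : G →* Kˣ, D.ψ γ e' = e' → γ g = 1) ∧ D.φ g y = e then 1 else 0 := by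
    intro g
    rw [hinner g, he.apply_eq_ite η ((he.map (D.φ g₀⁻¹)).map (D.φ g)) hη]
    by_cases hg : ∀ γ : G →* Kˣ, D.ψ γ e' = e' → γ g = 1
    · by_cases hgy : D.φ g y = e
      · rw [if_pos hg, if_pos hgy, if_pos ⟨hg, hgy⟩]
      · rw [if_pos hg, if_neg hgy, if_neg fun h => hgy h.2]
    · rw [if_neg hg, zero_mul, if_neg fun h : _ ∧ _ => hg h.1, mul_zero]
  rw [Finset.sum_congr rfl fun g _ => hterm g, ← Finset.mul_sum, Finset.sum_boole] at hcount
  have hN : N ≠ 0 := Finset.card_ne_zero.2 ⟨1, by simp⟩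
  have hcard : (Finset.univ.filter fun g => (∀ γ : G →* Kˣ, D.ψ γ e' = e' → γ g = 1) ∧
      D.φ g y = e).card ≠ 0 :=
    Finset.card_ne_zero.2 ⟨g₀, Finset.mem_filter.2 ⟨Finset.mem_univ _, hg₀,
      by rw [hφy, mul_inv_cancel, map_one, AlgEquiv.one_apply]⟩⟩
  norm_cast at hcount
  exact mul_ne_zero hN hcard hcount

theorem fixed_iff_rMatrixAct_eq [FiniteDimensional K A] [CharZero K]
    (he : IsPrimitiveIdempotent e) (he' : IsPrimitiveIdempotent e') (hη : η e = 1)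
    (hη' : η' e' = 1) :
    (∀ g : G, (∀ γ : G →* Kˣ, D.ψ γ e' = e' → γ g = 1) → D.φ g e = e) ↔
      D.rMatrixAct η'.toLinearMap η.toLinearMap = η'.toLinearMap ⊗ₜ η.toLinearMap := by
  rw [rMatrixAct_eq_tmul_iff]
  exact ⟨D.sum_mul_apply_φ_eq_of_fixed he he' hη hη', D.fixed_of_sum_mul_apply_φ_eq he he' hη hη'⟩

end CommRing

end YetterDrinfeldHopf

theorem yd_character_product_tfae_general
    (K : Type*) [Field K] [CharZero K]
    (G : Type*) [CommGroup G] [Fintype G] [Fintype (G →* Kˣ)]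
    (A : Type*) [CommRing A] [Algebra K A] [FiniteDimensional K A] [IsSemisimpleRing A]
    (D : YetterDrinfeldHopf K G A)
    (e e' : A) (he : IsPrimitiveIdempotent e) (he' : IsPrimitiveIdempotent e')
    (η η' : A →ₐ[K] K) (hη : η e = 1) (hη' : η' e' = 1) :
    ((∃ χ : A →ₐ[K] K, ∀ a : A, χ a =
        (TensorProduct.lid K K)
          ((TensorProduct.map η.toLinearMap η'.toLinearMap) (D.Δ a))) ↔
      (∀ g : G, (∀ γ : G →* Kˣ, D.ψ γ e' = e' → γ g = 1) → D.φ g e = e)) ∧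
    ((∀ g : G, (∀ γ : G →* Kˣ, D.ψ γ e' = e' → γ g = 1) → D.φ g e = e) ↔
      (Fintype.card G : K)⁻¹ •
        ∑ γ : G →* Kˣ, ∑ g : G, ((γ g : K))⁻¹ •
          ((η'.toLinearMap ∘ₗ (D.ψ γ).toLinearMap) ⊗ₜ[K]
            (η.toLinearMap ∘ₗ (D.φ g).toLinearMap)) =
      η'.toLinearMap ⊗ₜ[K] η.toLinearMap) := by
  have h23 := D.fixed_iff_rMatrixAct_eq he he' hη hη'
  exact ⟨(D.exists_algHom_apply_eq_conv_iff η η').trans h23.symm, h23⟩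

/-- For primitive idempotents `e, e'`, the following are equivalent:
(1) the convolution product `η_e * η_{e'}` is an algebra homomorphism `A → K`;
(2) `Q_{e'}^⊥ ⊆ T_e`;
(3) the quasisymmetry fixes `η_e ⊗ η_{e'}` up to the flip. -/
theorem yd_character_product_tfae
    (K : Type*) [Field K] [IsAlgClosed K] [CharZero K]
    (G : Type*) [CommGroup G] [Fintype G] [Fintype (G →* Kˣ)]
    (A : Type*) [CommRing A] [Algebra K A] [FiniteDimensional K A] [IsSemisimpleRing A]
    (D : YetterDrinfeldHopf K G A)
    (e e' : A) (he : IsPrimitiveIdempotent e) (he' : IsPrimitiveIdempotent e')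
    (η η' : A →ₐ[K] K) (hη : η e = 1) (hη' : η' e' = 1) :
    ((∃ χ : A →ₐ[K] K, ∀ a : A, χ a =
        (TensorProduct.lid K K)
          ((TensorProduct.map η.toLinearMap η'.toLinearMap) (D.Δ a))) ↔
      (∀ g : G, (∀ γ : G →* Kˣ, D.ψ γ e' = e' → γ g = 1) → D.φ g e = e)) ∧
    ((∀ g : G, (∀ γ : G →* Kˣ, D.ψ γ e' = e' → γ g = 1) → D.φ g e = e) ↔
      (Fintype.card G : K)⁻¹ •
        ∑ γ : G →* Kˣ, ∑ g : G, ((γ g : K))⁻¹ •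
          ((η'.toLinearMap ∘ₗ (D.ψ γ).toLinearMap) ⊗ₜ[K]
            (η.toLinearMap ∘ₗ (D.φ g).toLinearMap)) =
      η'.toLinearMap ⊗ₜ[K] η.toLinearMap) :=
  yd_character_product_tfae_general K G A D e e' he he' η η' hη hη'
end

section
/- Let V and W be K-vector spaces, ψ a K-linear representation of Ĝ on V, and φ a K-linear representation of G on W. Let T ≤ G and Q ≤ Ĝ be subgroups, and let v ∈ V and w ∈ W satisfy ψ_γ(v) = v for all γ ∈ Q and φ_g(w) = w for all g ∈ T. Then |G|⁻¹ · Σ_{γ ∈ Ĝ} Σ_{g ∈ Q^⊥} γ(g)⁻¹ · (φ_g(w) ⊗ ψ_γ(v)) = (|Q^⊥| · |Q ∩ T^⊥|)⁻¹ · Σ_{γ ∈ T^⊥} Σ_{g ∈ Q^⊥} γ(g)⁻¹ · (φ_g(w) ⊗ ψ_γ(v)) in W ⊗_K V. (The left-hand side is the Yetter-Drinfel'd quasisymmetry σ_{V,W}(v ⊗ w); the lemma says it reduces to a sum over T^⊥ × Q^⊥.) -/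
open TensorProduct

/-- For a subgroup `Q` of the character group `Ĝ = G →* Kˣ`, its perp
`Q^⊥ = {g ∈ G | γ(g) = 1 for all γ ∈ Q}`, a subgroup of `G`. -/
def charPerp {K : Type*} [Field K] {G : Type*} [CommGroup G] (Q : Subgroup (G →* Kˣ)) :
    Subgroup G where
  carrier := {g | ∀ γ ∈ Q, γ g = 1}
  one_mem' := fun γ _ => map_one γ
  mul_mem' := fun {a b} ha hb γ hγ => by rw [map_mul, ha γ hγ, hb γ hγ, one_mul]
  inv_mem' := fun {a} ha γ hγ => by rw [map_inv, ha γ hγ, inv_one]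

/-- For a subgroup `T` of `G`, its perp `T^⊥ = {γ ∈ Ĝ | γ(t) = 1 for all t ∈ T}`,
a subgroup of the character group `Ĝ = G →* Kˣ`. -/
def groupPerp (K : Type*) [Field K] {G : Type*} [CommGroup G] (T : Subgroup G) :
    Subgroup (G →* Kˣ) where
  carrier := {γ | ∀ t ∈ T, γ t = 1}
  one_mem' := fun t _ => rfl
  mul_mem' := fun {a b} ha hb t ht => by
    rw [MonoidHom.mul_apply, ha t ht, hb t ht, one_mul]
  inv_mem' := fun {a} ha t ht => by
    rw [MonoidHom.inv_apply, ha t ht, inv_one]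


/-!
Write `F γ = ∑_{g ∈ Q^⊥} γ(g)⁻¹ φ_g(w) ⊗ ψ_γ(v)`. Orthogonality of characters on `T` gives
`|T| ∑_{γ ∈ T^⊥} F γ = ∑_γ ∑_{t ∈ T} γ(t) F γ`. As `w` is fixed by `T`, the term `γ(t) F γ` is the
same sum taken over the coset `Q^⊥ t⁻¹`; as `v` is fixed by `Q`, the sum over all `γ` of
`γ(x)⁻¹ φ_x(w) ⊗ ψ_γ(v)` vanishes for `x ∉ Q^⊥`. So only `t ∈ T ∩ Q^⊥` contribute, and
`|T| ∑_{γ ∈ T^⊥} F γ = |T ∩ Q^⊥| ∑_γ F γ`. The constants then match by double counting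
`∑_{δ ∈ Q} ∑_{t ∈ T} δ(t)`, which gives `|Q ∩ T^⊥| |T| = |T ∩ Q^⊥| |Q|` and, for `T = G`,
`|Q| |Q^⊥| = |G|`.
-/

open scoped Classical in
theorem sum_units_val_apply_eq_ite {R A : Type*} [CommRing R] [IsDomain R] [Group A] [Fintype A]
    (χ : A →* Rˣ) : ∑ a, (χ a : R) = if χ = 1 then (Nat.card A : R) else 0 := by
  have h : (Units.coeHom R).comp χ = 1 ↔ χ = 1 := by
    simp only [MonoidHom.ext_iff, MonoidHom.comp_apply, Units.coeHom_apply, MonoidHom.one_apply,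
      Units.val_eq_one]
  simpa only [h, MonoidHom.comp_apply, Units.coeHom_apply, Nat.card_eq_fintype_card,
    apply_ite Nat.cast, Nat.cast_zero] using sum_hom_units ((Units.coeHom R).comp χ)

theorem Subgroup.sum_ite_mem {H M : Type*} [Group H] [AddCommMonoid M] (A B : Subgroup H)
    [Fintype A] [DecidablePred (· ∈ B)] (c : M) :
    ∑ a : A, (if (a : H) ∈ B then c else 0) = Nat.card ↥(A ⊓ B) • c := by
  rw [Finset.sum_ite, Finset.sum_const_zero, add_zero, Finset.sum_const,
    ← Fintype.card_subtype, ← Nat.card_eq_fintype_card]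
  congr 1
  exact Nat.card_congr (Equiv.subtypeSubtypeEquivSubtypeInter (· ∈ A) (· ∈ B))

theorem Subgroup.sum_mul_right {H M : Type*} [Group H] [AddCommMonoid M] (S : Subgroup H)
    [Fintype S] {f : H → M} (hf : ∀ x ∉ S, f x = 0) (t : H) [Decidable (t ∈ S)] :
    ∑ g : S, f (g * t) = if t ∈ S then ∑ g : S, f g else 0 := by
  split_ifs with ht
  · exact Equiv.sum_comp (Equiv.mulRight (⟨t, ht⟩ : S)) (fun g : S => f g)
  · refine Finset.sum_eq_zero fun g _ => hf _ fun hg => ht ?_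
    simpa using S.mul_mem (S.inv_mem g.2) hg

theorem SetLike.finsum_mem_coe_eq_sum {A α M : Type*} [SetLike A α] [AddCommMonoid M] (s : A)
    [Fintype s] (f : α → M) : ∑ᶠ a ∈ (s : Set α), f a = ∑ a : s, f a :=
  (finsum_subtype_eq_finsum_cond _).symm.trans (finsum_eq_sum_of_fintype _)

section Orthogonality

variable {K : Type*} [Field K] {G : Type*} [CommGroup G]

open scoped Classical in
theorem sum_apply_subgroup_eq_ite (T : Subgroup G) [Fintype T] (γ : G →* Kˣ) :
    ∑ t : T, (γ t : K) = if γ ∈ groupPerp K T then (Nat.card T : K) else 0 := by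
  have h : γ.comp T.subtype = 1 ↔ γ ∈ groupPerp K T := by
    simp [MonoidHom.ext_iff, groupPerp]
  have := sum_units_val_apply_eq_ite (γ.comp T.subtype)
  simp only [h] at this
  exact this

open scoped Classical in
theorem sum_subgroup_eval_eq_ite (Q : Subgroup (G →* Kˣ)) [Fintype Q] (g : G) :
    ∑ δ : Q, ((δ : G →* Kˣ) g : K) = if g ∈ charPerp Q then (Nat.card Q : K) else 0 := by
  let ev : Q →* Kˣ :=
    { toFun := fun δ => (δ : G →* Kˣ) g, map_one' := rfl, map_mul' := fun _ _ => rfl }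
  have h : ev = 1 ↔ g ∈ charPerp Q := by
    simp [MonoidHom.ext_iff, charPerp, ev]
  have := sum_units_val_apply_eq_ite ev
  simp only [h] at this
  exact this

theorem groupPerp_top : groupPerp K (⊤ : Subgroup G) = ⊥ := by
  ext γ
  simp [groupPerp, MonoidHom.ext_iff]

variable [CharZero K] [Finite G] [Finite (G →* Kˣ)]

theorem card_inf_groupPerp_mul_card (T : Subgroup G) (Q : Subgroup (G →* Kˣ)) :
    Nat.card ↥(Q ⊓ groupPerp K T) * Nat.card T = Nat.card ↥(T ⊓ charPerp Q) * Nat.card Q := by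
  classical
  have := Fintype.ofFinite G
  have := Fintype.ofFinite (G →* Kˣ)
  have key : ∑ δ : Q, ∑ t : T, ((δ : G →* Kˣ) t : K) =
      ∑ t : T, ∑ δ : Q, ((δ : G →* Kˣ) t : K) := Finset.sum_comm
  simp only [sum_apply_subgroup_eq_ite, sum_subgroup_eval_eq_ite, Subgroup.sum_ite_mem,
    nsmul_eq_mul] at key
  exact_mod_cast key

theorem card_mul_card_charPerp (Q : Subgroup (G →* Kˣ)) :
    Nat.card Q * Nat.card (charPerp Q) = Nat.card G := by
  simpa [groupPerp_top, mul_comm] using (card_inf_groupPerp_mul_card ⊤ Q).symm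

theorem card_charPerp_mul_card_inf_mul_card (T : Subgroup G) (Q : Subgroup (G →* Kˣ)) :
    Nat.card (charPerp Q) * Nat.card ↥(Q ⊓ groupPerp K T) * Nat.card T =
      Nat.card ↥(T ⊓ charPerp Q) * Nat.card G := by
  rw [← card_mul_card_charPerp Q, mul_assoc, card_inf_groupPerp_mul_card]
  ring

end Orthogonality

section Reduction

variable {K : Type*} [Field K] {G : Type*} [CommGroup G] [Fintype (G →* Kˣ)]
  {M : Type*} [AddCommGroup M] [Module K M]

theorem sum_smul_eq_card_smul_sum_groupPerp (T : Subgroup G) [Fintype T]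
    [Fintype (groupPerp K T)] (f : (G →* Kˣ) → M) :
    ∑ γ, (∑ t : T, (γ t : K)) • f γ = (Nat.card T : K) • ∑ γ : groupPerp K T, f γ := by
  classical
  simp only [sum_apply_subgroup_eq_ite, ite_smul, zero_smul]
  rw [← Finset.sum_filter, Finset.sum_subtype (p := (· ∈ groupPerp K T)) _ (fun _ => by simp),
    Finset.smul_sum]

theorem sum_inv_apply_smul_eq_zero {Q : Subgroup (G →* Kˣ)} {x : G} (hx : x ∉ charPerp Q)
    {f : (G →* Kˣ) → M} (hf : ∀ γ, ∀ δ ∈ Q, f (γ * δ) = f γ) :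
    ∑ γ, (γ x : K)⁻¹ • f γ = 0 := by
  obtain ⟨δ, hδQ, hδx⟩ : ∃ δ ∈ Q, δ x ≠ 1 := by simpa [charPerp] using hx
  have hshift : ∑ γ, (γ x : K)⁻¹ • f γ = (δ x : K)⁻¹ • ∑ γ, (γ x : K)⁻¹ • f γ := by
    rw [Finset.smul_sum, ← Equiv.sum_comp (Equiv.mulRight δ)]
    refine Finset.sum_congr rfl fun γ _ => ?_
    simp [hf γ δ hδQ, smul_smul, mul_comm]
  have hne : (δ x : K)⁻¹ ≠ 1 := by simpa [Units.val_eq_one] using hδx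
  by_contra hS
  exact hne (smul_left_injective K hS (hshift.symm.trans (one_smul K _).symm))

variable {T : Subgroup G} {Q : Subgroup (G →* Kˣ)} [Fintype T] [Fintype (charPerp Q)]
  [Fintype (groupPerp K T)] {S : (G →* Kˣ) → G → M}

theorem card_smul_sum_groupPerp_eq (hT : ∀ γ g, ∀ t ∈ T, S γ (g * t⁻¹) = (γ t : K) • S γ g)
    (hQ : ∀ x ∉ charPerp Q, ∑ γ, S γ x = 0) :
    (Nat.card T : K) • ∑ γ : groupPerp K T, ∑ g : charPerp Q, S γ g =
      (Nat.card ↥(T ⊓ charPerp Q) : K) • ∑ γ, ∑ g : charPerp Q, S γ g := by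
  classical
  calc (Nat.card T : K) • ∑ γ : groupPerp K T, ∑ g : charPerp Q, S γ g
      = ∑ γ, (∑ t : T, (γ t : K)) • ∑ g : charPerp Q, S γ g :=
        (sum_smul_eq_card_smul_sum_groupPerp T fun γ => ∑ g : charPerp Q, S γ g).symm
    _ = ∑ γ, ∑ t : T, ∑ g : charPerp Q, S γ (g * (t : G)⁻¹) := by
        simp only [Finset.smul_sum, Finset.sum_smul, hT _ _ _ (SetLike.coe_mem _)]
        exact Finset.sum_congr rfl fun γ _ => Finset.sum_comm
    _ = ∑ t : T, ∑ g : charPerp Q, ∑ γ, S γ (g * (t : G)⁻¹) := by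
        rw [Finset.sum_comm]
        exact Finset.sum_congr rfl fun t _ => Finset.sum_comm
    _ = ∑ t : T, if (t : G) ∈ charPerp Q then ∑ g : charPerp Q, ∑ γ, S γ g else 0 := by
        simp only [(charPerp Q).sum_mul_right hQ, inv_mem_iff]
    _ = (Nat.card ↥(T ⊓ charPerp Q) : K) • ∑ γ, ∑ g : charPerp Q, S γ g := by
        rw [Subgroup.sum_ite_mem, Nat.cast_smul_eq_nsmul, Finset.sum_comm]

theorem inv_card_smul_sum_eq_inv_card_smul_sum_groupPerp [CharZero K] [Fintype G]
    (hT : ∀ γ g, ∀ t ∈ T, S γ (g * t⁻¹) = (γ t : K) • S γ g)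
    (hQ : ∀ x ∉ charPerp Q, ∑ γ, S γ x = 0) :
    (Fintype.card G : K)⁻¹ • ∑ γ, ∑ g : charPerp Q, S γ g =
      ((Nat.card ↥(charPerp Q) * Nat.card ↥(Q ⊓ groupPerp K T) : ℕ) : K)⁻¹ •
        ∑ γ : groupPerp K T, ∑ g : charPerp Q, S γ g := by
  have hcard : ((Nat.card ↥(charPerp Q) * Nat.card ↥(Q ⊓ groupPerp K T) : ℕ) : K) *
      Nat.card T = Nat.card ↥(T ⊓ charPerp Q) * Fintype.card G := by
    exact_mod_cast Nat.card_eq_fintype_card (α := G) ▸ card_charPerp_mul_card_inf_mul_card T Q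
  have hT0 : (Nat.card T : K) ≠ 0 := Nat.cast_ne_zero.2 Nat.card_pos.ne'
  have hG0 : (Fintype.card G : K) ≠ 0 := Nat.cast_ne_zero.2 Fintype.card_pos.ne'
  have hN0 : ((Nat.card ↥(charPerp Q) * Nat.card ↥(Q ⊓ groupPerp K T) : ℕ) : K) ≠ 0 :=
    Nat.cast_ne_zero.2 (Nat.mul_ne_zero Nat.card_pos.ne' Nat.card_pos.ne')
  rw [← inv_smul_smul₀ hT0 (∑ γ : groupPerp K T, _), card_smul_sum_groupPerp_eq hT hQ,
    smul_smul, smul_smul]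
  congr 1
  field_simp
  linear_combination hcard

end Reduction

theorem quasisymmetry_reduction_general
    (K : Type*) [Field K] [CharZero K]
    (G : Type*) [CommGroup G] [Fintype G] [Fintype (G →* Kˣ)]
    (V W : Type*) [AddCommGroup V] [Module K V] [AddCommGroup W] [Module K W]
    (ψ : (G →* Kˣ) →* (V ≃ₗ[K] V)) (φ : G →* (W ≃ₗ[K] W))
    (T : Subgroup G) (Q : Subgroup (G →* Kˣ))
    (v : V) (w : W)
    (hv : ∀ γ ∈ Q, ψ γ v = v) (hw : ∀ g ∈ T, φ g w = w) :
    (Fintype.card G : K)⁻¹ •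
      ∑ γ : G →* Kˣ, ∑ᶠ g ∈ (charPerp Q : Set G),
        ((γ g : K))⁻¹ • ((φ g w) ⊗ₜ[K] (ψ γ v)) =
    ((Nat.card ↥(charPerp Q) * Nat.card ↥(Q ⊓ groupPerp K T) : ℕ) : K)⁻¹ •
      ∑ᶠ γ ∈ (groupPerp K T : Set (G →* Kˣ)), ∑ᶠ g ∈ (charPerp Q : Set G),
        ((γ g : K))⁻¹ • ((φ g w) ⊗ₜ[K] (ψ γ v)) := by
  classical
  simp only [SetLike.finsum_mem_coe_eq_sum]
  refine inv_card_smul_sum_eq_inv_card_smul_sum_groupPerp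
    (S := fun γ g => (γ g : K)⁻¹ • (φ g w ⊗ₜ[K] ψ γ v)) (fun γ g t ht => ?_) (fun x hx => ?_)
  · rw [map_mul φ, LinearEquiv.mul_apply, hw _ (T.inv_mem ht), smul_smul]
    congr 1
    simp
  · exact sum_inv_apply_smul_eq_zero hx fun γ δ hδ => by
      rw [map_mul ψ, LinearEquiv.mul_apply, hv δ hδ]

/-- If `v` is fixed by `Q ≤ Ĝ` and `w` is fixed by `T ≤ G`, the quasisymmetry
`σ(v ⊗ w) = |G|⁻¹ ∑_{γ ∈ Ĝ} ∑_{g ∈ Q^⊥} γ(g)⁻¹ φ_g(w) ⊗ ψ_γ(v)` reduces to a sum over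
`T^⊥ × Q^⊥` with coefficient `(|Q^⊥|·|Q ∩ T^⊥|)⁻¹`. -/
theorem quasisymmetry_reduction
    (K : Type*) [Field K] [IsAlgClosed K] [CharZero K]
    (G : Type*) [CommGroup G] [Fintype G] [Fintype (G →* Kˣ)]
    (V W : Type*) [AddCommGroup V] [Module K V] [AddCommGroup W] [Module K W]
    (ψ : (G →* Kˣ) →* (V ≃ₗ[K] V)) (φ : G →* (W ≃ₗ[K] W))
    (T : Subgroup G) (Q : Subgroup (G →* Kˣ))
    (v : V) (w : W)
    (hv : ∀ γ ∈ Q, ψ γ v = v) (hw : ∀ g ∈ T, φ g w = w) :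
    (Fintype.card G : K)⁻¹ •
      ∑ γ : G →* Kˣ, ∑ᶠ g ∈ (charPerp Q : Set G),
        ((γ g : K))⁻¹ • ((φ g w) ⊗ₜ[K] (ψ γ v)) =
    ((Nat.card ↥(charPerp Q) * Nat.card ↥(Q ⊓ groupPerp K T) : ℕ) : K)⁻¹ •
      ∑ᶠ γ ∈ (groupPerp K T : Set (G →* Kˣ)), ∑ᶠ g ∈ (charPerp Q : Set G),
        ((γ g : K))⁻¹ • ((φ g w) ⊗ₜ[K] (ψ γ v)) :=
  quasisymmetry_reduction_general K G V W ψ φ T Q v w hv hw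
end

section
/- Let V be a K-vector space with a K-linear representation φ of G, let Q ≤ Ĝ be a subgroup and H := Q^⊥, and let e ∈ V be an element whose orbit {φ_g(e) | g ∈ H} is a linearly independent subset of V. Let T := {g ∈ G | φ_g(e) = e} be the stabilizer of e and m := [H : T ∩ H]. For γ ∈ Ĝ define w_γ := |T ∩ H|⁻¹ · Σ_{g ∈ H} γ(g)⁻¹ · φ_g(e). If γ₁, …, γ_m ∈ T^⊥ is a system of representatives for the cosets of Q ∩ T^⊥ in T^⊥, then (w_{γ₁}, …, w_{γ_m}) is a basis of the K-span of {φ_g(e) | g ∈ H}, and moreover φ_g(e) = m⁻¹ · Σ_{j=1}^m γ_j(g) · w_{γ_j} for every g ∈ H. -/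
theorem sum_apply_eq_zero_of_existsUnique_inv_mul_mem {A R ι : Type*} [Group A] [Ring R]
    [NoZeroDivisors R] [Fintype ι] {B P : Subgroup A} {γs : ι → A} (hγs : ∀ j, γs j ∈ B)
    (hrep : ∀ χ ∈ B, ∃! j, (γs j)⁻¹ * χ ∈ P) (f : A →* R) (hfP : ∀ p ∈ P, f p = 1)
    {χ : A} (hχ : χ ∈ B) (hfχ : f χ ≠ 1) : ∑ j, f (γs j) = 0 := by
  choose σ hσ using fun j => (hrep (χ * γs j) (mul_mem hχ (hγs j))).exists
  have hσ_inj : σ.Injective := by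
    intro j k hjk
    have hkj : (γs k)⁻¹ * γs j ∈ P := by
      have := mul_mem (inv_mem (hσ k)) (hσ j)
      rwa [hjk, mul_inv_rev, mul_inv_rev, inv_inv, mul_assoc, mul_assoc, mul_inv_cancel_left,
        inv_mul_cancel_left] at this
    exact (hrep (γs j) (hγs j)).unique (by simp [P.one_mem]) hkj
  have hfσ : ∀ j, f χ * f (γs j) = f (γs (σ j)) := fun j => by
    rw [← map_mul, ← mul_inv_cancel_left (γs (σ j)) (χ * γs j), map_mul _ (γs (σ j)),
      hfP _ (hσ j), mul_one]
  have hS : f χ * ∑ j, f (γs j) = ∑ j, f (γs j) := by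
    rw [Finset.mul_sum]
    exact Fintype.sum_bijective σ hσ_inj.bijective_of_finite _ _ hfσ
  have hS' : (f χ - 1) * ∑ j, f (γs j) = 0 := by
    rw [sub_one_mul, hS, sub_self]
  exact (mul_eq_zero.mp hS').resolve_left (sub_ne_zero.mpr hfχ)

theorem exists_mem_groupPerp_apply_ne_one (K : Type*) [Field K] [IsAlgClosed K] [CharZero K]
    {G : Type*} [CommGroup G] [Finite G] {T : Subgroup G} {g : G} (hg : g ∉ T) :
    ∃ χ ∈ groupPerp K T, χ g ≠ 1 := by
  obtain ⟨ψ, hψ⟩ := CommGroup.exists_apply_ne_one_of_hasEnoughRootsOfUnity (G ⧸ T) K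
    (a := g) (by rwa [Ne, QuotientGroup.eq_one_iff])
  refine ⟨ψ.comp (QuotientGroup.mk' T), fun t ht => ?_, hψ⟩
  simp [(QuotientGroup.eq_one_iff t).mpr ht]

theorem sum_coe_apply_eq_zero {K : Type*} [Field K] [IsAlgClosed K] [CharZero K]
    {G : Type*} [CommGroup G] [Finite G] {Q : Subgroup (G →* Kˣ)} {T : Subgroup G}
    {ι : Type*} [Fintype ι] {γs : ι → (G →* Kˣ)} (hγs : ∀ j, γs j ∈ groupPerp K T)
    (hrep : ∀ χ ∈ groupPerp K T, ∃! j, (γs j)⁻¹ * χ ∈ Q ⊓ groupPerp K T)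
    {x : G} (hxQ : x ∈ charPerp Q) (hxT : x ∉ T) : ∑ j, (γs j x : K) = 0 := by
  obtain ⟨χ, hχ, hχx⟩ := exists_mem_groupPerp_apply_ne_one K hxT
  exact sum_apply_eq_zero_of_existsUnique_inv_mul_mem hγs hrep
    ((Units.coeHom K).comp (MonoidHom.eval x)) (fun p hp => by simp [hxQ p hp.1]) hχ
    (by simpa using hχx)

theorem smul_finsum_mem_inv_smul {K G V : Type*} [Field K] [CommGroup G] [AddCommGroup V]
    [Module K V] (γ : G →* Kˣ) (f : G → V) {H : Subgroup G} [Fintype H] {x : G} (hx : x ∈ H) :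
    (γ x : K) • ∑ᶠ g ∈ (H : Set G), (γ g : K)⁻¹ • f g = ∑ t : H, (γ t : K) • f (x / t) := by
  rw [← finsum_set_coe_eq_finsum_mem, finsum_eq_sum_of_fintype, Finset.smul_sum,
    ← (Equiv.divLeft (⟨x, hx⟩ : H)).sum_comp]
  refine Finset.sum_congr rfl fun t _ => ?_
  simp [smul_smul, div_eq_mul_inv]

theorem card_subtype_mem_eq_card_inf {G : Type*} [Group G] (T H : Subgroup G) :
    Nat.card {t : H // (t : G) ∈ T} = Nat.card ↥(T ⊓ H) :=
  Nat.card_congr ((Equiv.subtypeSubtypeEquivSubtypeInter _ _).trans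
    (Equiv.subtypeEquivRight fun _ => and_comm))

theorem sum_apply_smul_finsum_mem_eq {K : Type*} [Field K] [IsAlgClosed K] [CharZero K]
    {G : Type*} [CommGroup G] [Finite G] {V : Type*} [AddCommGroup V] [Module K V]
    (φ : G →* (V ≃ₗ[K] V)) {e : V} {T : Subgroup G} (hT : ∀ t ∈ T, φ t e = e)
    {Q : Subgroup (G →* Kˣ)} {H : Subgroup G} [Fintype H] (hHQ : H ≤ charPerp Q)
    {ι : Type*} [Fintype ι] {γs : ι → (G →* Kˣ)} (hγs : ∀ j, γs j ∈ groupPerp K T)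
    (hrep : ∀ χ ∈ groupPerp K T, ∃! j, (γs j)⁻¹ * χ ∈ Q ⊓ groupPerp K T) {x : G} (hx : x ∈ H) :
    ∑ j, (γs j x : K) • ∑ᶠ g ∈ (H : Set G), (γs j g : K)⁻¹ • φ g e =
      (Nat.card ↥(T ⊓ H) * Fintype.card ι : K) • φ x e := by
  classical
  have hterm : ∀ t : H, (∑ j, (γs j t : K)) • φ (x / t) e =
      if (t : G) ∈ T then (Fintype.card ι : K) • φ x e else 0 := by
    intro t
    split_ifs with htT
    · have hfix : φ (x / t) e = φ x e := by
        rw [div_eq_mul_inv, map_mul, LinearEquiv.mul_apply, hT _ (inv_mem htT)]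
      rw [hfix]
      simp [hγs _ _ htT]
    · rw [sum_coe_apply_eq_zero hγs hrep (hHQ t.2) htT, zero_smul]
  simp_rw [smul_finsum_mem_inv_smul _ _ hx]
  rw [Finset.sum_comm]
  simp_rw [← Finset.sum_smul, hterm]
  rw [Finset.sum_ite, Finset.sum_const_zero, add_zero, Finset.sum_const,
    ← Nat.cast_smul_eq_nsmul K, smul_smul, ← card_subtype_mem_eq_card_inf,
    Nat.card_eq_fintype_card, Fintype.card_subtype]

theorem MulAction.ncard_image_smul_eq_relIndex {G X : Type*} [Group G] [MulAction G X]
    (H : Subgroup G) (x : X) :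
    ((· • x) '' (H : Set G)).ncard = (stabilizer G x).relIndex H := by
  have horbit : (· • x) '' (H : Set G) = orbit H x := by
    ext y
    simp [orbit, Subgroup.smul_def]
  rw [horbit, ← index_stabilizer, Subgroup.relIndex]
  rfl

theorem ncard_image_apply_eq_relIndex {K G V : Type*} [Field K] [Group G] [AddCommGroup V]
    [Module K V] (φ : G →* (V ≃ₗ[K] V)) {e : V} {T : Subgroup G}
    (hT : ∀ g, g ∈ T ↔ φ g e = e) (H : Subgroup G) :
    ((fun g => φ g e) '' (H : Set G)).ncard = T.relIndex H := by
  let : MulAction G V := MulAction.compHom V φ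
  have hstab : MulAction.stabilizer G e = T := by
    ext g
    exact (hT g).symm
  rw [← hstab]
  exact MulAction.ncard_image_smul_eq_relIndex H e

theorem LinearIndepOn.finrank_span_eq_ncard {K V : Type*} [DivisionRing K] [AddCommGroup V]
    [Module K V] {s : Set V} (hs : LinearIndepOn K id s) :
    Module.finrank K (Submodule.span K s) = s.ncard := by
  rw [Module.finrank, rank_span_set hs]
  rfl

theorem Submodule.finsum_mem_smul_mem_span_image {K G V : Type*} [Field K] [AddCommGroup V]
    [Module K V] (c : G → K) (f : G → V) (s : Set G) :
    ∑ᶠ g ∈ s, c g • f g ∈ span K (f '' s) :=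
  finsum_mem_induction _ (zero_mem _) (fun _ _ => add_mem) fun g hg =>
    smul_mem _ _ (subset_span ⟨g, hg, rfl⟩)

/-- Discrete Fourier transform of an orbit: if the orbit `{φ_g(e) | g ∈ H}` (with
`H = Q^⊥`) is linearly independent, `T` is the stabilizer of `e`, `m = [H : T ∩ H]`, and
`γ₁, …, γ_m ∈ T^⊥` represent the cosets of `Q ∩ T^⊥` in `T^⊥`, then the elements
`w_γ := |T ∩ H|⁻¹ ∑_{g ∈ H} γ(g)⁻¹ φ_g(e)` for `γ = γ₁, …, γ_m` form a basis of the span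
of the orbit, and `φ_g(e) = m⁻¹ ∑_j γ_j(g) w_{γ_j}` for all `g ∈ H`. -/
theorem fourier_basis_of_orbit
    (K : Type*) [Field K] [IsAlgClosed K] [CharZero K]
    (G : Type*) [CommGroup G] [Fintype G]
    (V : Type*) [AddCommGroup V] [Module K V]
    (φ : G →* (V ≃ₗ[K] V)) (Q : Subgroup (G →* Kˣ))
    (H : Subgroup G) (hH : H = charPerp Q)
    (e : V)
    (hind : LinearIndependent K
      (fun x : ((fun g : G => φ g e) '' (H : Set G)) => (x : V)))
    (T : Subgroup G) (hT : ∀ g : G, g ∈ T ↔ φ g e = e)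
    (m : ℕ) (hm : m = T.relIndex H)
    (w : (G →* Kˣ) → V)
    (hw : ∀ γ : G →* Kˣ,
      w γ = ((Nat.card ↥(T ⊓ H) : K))⁻¹ • ∑ᶠ g ∈ (H : Set G), ((γ g : K))⁻¹ • φ g e)
    (γs : Fin m → (G →* Kˣ)) (hγs : ∀ j, γs j ∈ groupPerp K T)
    (hrep : ∀ χ ∈ groupPerp K T, ∃! j : Fin m, (γs j)⁻¹ * χ ∈ Q ⊓ groupPerp K T) :
    LinearIndependent K (fun j : Fin m => w (γs j)) ∧
    Submodule.span K (Set.range fun j : Fin m => w (γs j)) =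
      Submodule.span K ((fun g : G => φ g e) '' (H : Set G)) ∧
    ∀ g ∈ H, φ g e = (m : K)⁻¹ • ∑ j : Fin m, ((γs j) g : K) • w (γs j) := by
  classical
  have hcard : (Nat.card ↥(T ⊓ H) : K) ≠ 0 := Nat.cast_ne_zero.mpr Nat.card_pos.ne'
  have hm0 : (m : K) ≠ 0 := Nat.cast_ne_zero.mpr (hm ▸ Subgroup.index_ne_zero_of_finite)
  have hinv : ∀ x ∈ H, φ x e = (m : K)⁻¹ • ∑ j : Fin m, ((γs j) x : K) • w (γs j) := by
    intro x hx
    simp only [hw, smul_comm _ ((Nat.card ↥(T ⊓ H) : K))⁻¹]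
    rw [← Finset.smul_sum, sum_apply_smul_finsum_mem_eq φ (fun t ht => (hT t).mp ht)
      hH.le hγs hrep hx, Fintype.card_fin, smul_smul, smul_smul, mul_assoc,
      inv_mul_cancel_left₀ hcard, inv_mul_cancel₀ hm0, one_smul]
  have hspan : Submodule.span K (Set.range fun j : Fin m => w (γs j)) =
      Submodule.span K ((fun g : G => φ g e) '' (H : Set G)) := by
    apply le_antisymm
    · rw [Submodule.span_le, Set.range_subset_iff]
      intro j
      rw [SetLike.mem_coe, hw]
      exact Submodule.smul_mem _ _ (Submodule.finsum_mem_smul_mem_span_image _ _ _)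
    · rw [Submodule.span_le, Set.image_subset_iff]
      intro g hg
      rw [Set.mem_preimage, SetLike.mem_coe, hinv g hg]
      exact Submodule.smul_mem _ _ (Submodule.sum_mem _ fun j _ =>
        Submodule.smul_mem _ _ (Submodule.subset_span ⟨j, rfl⟩))
  refine ⟨?_, hspan, hinv⟩
  rw [linearIndependent_iff_card_eq_finrank_span, Set.finrank, hspan, Fintype.card_fin,
    LinearIndepOn.finrank_span_eq_ncard hind, ncard_image_apply_eq_relIndex φ hT, hm]
end

section
/- Let G be a finite abelian group acting on finite sets X and Y, and suppose the action of G on X is transitive. Let K be a field of characteristic zero. If the permutation representations of G on the free K-vector spaces with bases X and Y are isomorphic as K-linear representations of G (i.e. there is a K-linear bijection intertwining the two G-actions), then X and Y are isomorphic as G-sets, i.e. there exists a G-equivariant bijection X → Y. -/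
/-!
The trace of the permutation operator of `g` on `K[X]` is the number of fixed points of `g`, so
a linear isomorphism of the two representations forces `g` to have equally many fixed points on
`X` and on `Y` (this needs characteristic zero). By Burnside's lemma `Y` then has as many orbits
as `X`, namely one. For a transitive action of an abelian group the stabilizer of a point is the
kernel of the action, i.e. the set of `g` with `|X|` fixed points; as `|X| = |Y|` (take `g = 1`),
`X` and `Y` have the same point stabilizer `H`, and both are isomorphic to `G ⧸ H`.
-/

open Finsupp MulAction

theorem LinearMap.trace_lmapDomain (K : Type*) [CommRing K] {X : Type*} [Finite X] (σ : X → X) :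
    LinearMap.trace K (X →₀ K) (lmapDomain K K σ) = (Function.fixedPoints σ).ncard := by
  classical
  cases nonempty_fintype X
  rw [LinearMap.trace_eq_matrix_trace K Finsupp.basisSingleOne, Matrix.trace,
    ← Nat.card_coe_set_eq, Nat.card_eq_fintype_card, Fintype.card_subtype]
  simp [LinearMap.toMatrix_apply, Finsupp.single_apply, Function.fixedPoints, Function.IsFixedPt, eq_comm]

theorem ncard_fixedPoints_eq_of_linearEquiv (K : Type*) [CommRing K] [CharZero K]
    {X Y : Type*} [Finite X] [Finite Y] {σ : X → X} {τ : Y → Y}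
    (f : (X →₀ K) ≃ₗ[K] (Y →₀ K)) (hf : ∀ v, f (mapDomain σ v) = mapDomain τ (f v)) :
    (Function.fixedPoints σ).ncard = (Function.fixedPoints τ).ncard := by
  have hconj : f.conj (lmapDomain K K σ) = lmapDomain K K τ :=
    LinearMap.ext fun w => by simp [LinearEquiv.conj_apply, hf]
  have htrace := congrArg (LinearMap.trace K (Y →₀ K)) hconj
  rw [LinearMap.trace_conj', LinearMap.trace_lmapDomain, LinearMap.trace_lmapDomain] at htrace
  exact_mod_cast htrace

namespace MulAction

variable {G X Y : Type*}

section Burnside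

variable [Group G] [Finite G] [MulAction G X] [MulAction G Y] [Finite X] [Finite Y]

theorem card_orbitRel_quotient_eq_of_ncard_fixedBy_eq
    (h : ∀ g : G, (fixedBy X g).ncard = (fixedBy Y g).ncard) :
    Nat.card (orbitRel.Quotient G X) = Nat.card (orbitRel.Quotient G Y) := by
  classical
  cases nonempty_fintype G
  cases nonempty_fintype X
  cases nonempty_fintype Y
  have hX := sum_card_fixedBy_eq_card_orbits_mul_card_group G X
  have hY := sum_card_fixedBy_eq_card_orbits_mul_card_group G Y
  simp only [Fintype.card_eq_nat_card, Nat.card_coe_set_eq, h] at hX hY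
  exact Nat.eq_of_mul_eq_mul_right Nat.card_pos (hX.symm.trans hY)

theorem isPretransitive_of_ncard_fixedBy_eq [Nonempty X] [IsPretransitive G X]
    (h : ∀ g : G, (fixedBy X g).ncard = (fixedBy Y g).ncard) : IsPretransitive G Y := by
  obtain ⟨_⟩ := (pretransitive_iff_unique_quotient_of_nonempty G X).mp ‹_›
  rw [pretransitive_iff_subsingleton_quotient, ← Finite.card_le_one_iff_subsingleton,
    ← card_orbitRel_quotient_eq_of_ncard_fixedBy_eq h, Nat.card_unique]

end Burnside

theorem mem_stabilizer_iff_fixedBy_eq_univ [CommGroup G] [MulAction G X] [IsPretransitive G X]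
    {g : G} (x : X) : g ∈ stabilizer G x ↔ fixedBy X g = Set.univ := by
  refine ⟨fun hg => Set.eq_univ_of_forall fun x' => ?_,
    fun hg => mem_stabilizer_iff.mpr (Set.eq_univ_iff_forall.mp hg x)⟩
  obtain ⟨h, rfl⟩ := exists_smul_eq G x x'
  rw [mem_fixedBy, ← mem_stabilizer_iff, stabilizer_smul_eq_right]
  exact hg

section Transitive

variable [Group G] [MulAction G X] [MulAction G Y] [IsPretransitive G X] [IsPretransitive G Y]

theorem surjective_ofQuotientStabilizer (x : X) :
    Function.Surjective (ofQuotientStabilizer G x) := fun x' =>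
  let ⟨g, hg⟩ := exists_smul_eq G x x'
  ⟨g, hg⟩

theorem exists_equiv_smul_of_stabilizer_eq {x : X} {y : Y}
    (h : stabilizer G x = stabilizer G y) :
    ∃ b : X ≃ Y, ∀ (g : G) (x : X), b (g • x) = g • b x := by
  let ex := Equiv.ofBijective _
    ⟨injective_ofQuotientStabilizer G x, surjective_ofQuotientStabilizer x⟩
  let ey := Equiv.ofBijective _
    ⟨injective_ofQuotientStabilizer G y, surjective_ofQuotientStabilizer y⟩
  let b := (ex.symm.trans (Subgroup.quotientEquivOfEq h)).trans ey
  have hb : ∀ g : G, b (g • x) = g • y := fun g => by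
    have hex : ex.symm (g • x) = g := ex.symm_apply_eq.mpr (ofQuotientStabilizer_mk G x g).symm
    simp only [b, Equiv.trans_apply, hex, Subgroup.quotientEquivOfEq_mk]
    exact ofQuotientStabilizer_mk G y g
  refine ⟨b, fun g x' => ?_⟩
  obtain ⟨g', rfl⟩ := exists_smul_eq G x x'
  rw [smul_smul, hb, hb, mul_smul]

end Transitive

end MulAction

/-- Two permutation representations of a finite abelian group that are isomorphic as linear
representations over a field of characteristic zero are isomorphic as permutation
representations, provided one of them is transitive. -/
theorem perm_rep_iso_of_linear_iso
    (K : Type*) [Field K] [CharZero K]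
    (G : Type*) [CommGroup G] [Finite G]
    (X Y : Type*) [Finite X] [Finite Y] [MulAction G X] [MulAction G Y]
    (htrans : MulAction.IsPretransitive G X)
    (f : (X →₀ K) ≃ₗ[K] (Y →₀ K))
    (hf : ∀ (g : G) (v : X →₀ K),
      f (Finsupp.mapDomain (fun x => g • x) v) = Finsupp.mapDomain (fun y => g • y) (f v)) :
    ∃ b : X ≃ Y, ∀ (g : G) (x : X), b (g • x) = g • b x := by
  have hfix (g : G) : (fixedBy X g).ncard = (fixedBy Y g).ncard :=
    ncard_fixedPoints_eq_of_linearEquiv K f (hf g)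
  have hcard : Nat.card X = Nat.card Y := by simpa using hfix 1
  rcases isEmpty_or_nonempty X with hX | ⟨⟨x₀⟩⟩
  · have : IsEmpty Y := Finite.card_eq_zero_iff.mp (hcard ▸ Nat.card_of_isEmpty)
    exact ⟨Equiv.equivOfIsEmpty X Y, fun _ x => isEmptyElim x⟩
  have : Nonempty X := ⟨x₀⟩
  have := isPretransitive_of_ncard_fixedBy_eq hfix
  obtain ⟨y₀⟩ : Nonempty Y := Finite.card_pos_iff.mp (hcard ▸ Finite.card_pos)
  refine exists_equiv_smul_of_stabilizer_eq (x := x₀) (y := y₀) (Subgroup.ext fun g => ?_)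
  rw [mem_stabilizer_iff_fixedBy_eq_univ, mem_stabilizer_iff_fixedBy_eq_univ, Set.eq_univ_iff_ncard,
    Set.eq_univ_iff_ncard, hfix, hcard]
end
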